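/- arXiv:2110.11623 — 6 statements merged into one kernel-verified Lean document; each statement's English description precedes it below -/
import Mathlib

section
/- Let V be a non-negative bounded dg g-module and let {α_k : V^k ⊗ ∧^k g → g} (0 ≤ k ≤ u, where u = min(top(V), dim g)) be a family of linear maps. The corresponding Ω_g-linear degree-0 map α : Ω_g(V) → Ω_g(g) defines a dg Loday–Pirashvili module (V, α) if and only if for all 0 ≤ k ≤ u, all x_1,…,x_{k+1} ∈ g and v ∈ V^k: α_{k+1}(d^V_k v | x_1,…,x_{k+1}) = Σ_{i=1}^{k+1} (−1)^{i+1} ( [x_i, α_k(v | x_1,…,x̂_i,…,x_{k+1})]_g − α_k(x_i ▷ v | x_1,…,x̂_i,…,x_{k+1}) ) + Σ_{i<j} (−1)^{i+j} α_k(v | [x_i,x_j]_g, x_1,…,x̂_i,…,x̂_j,…,x_{k+1}). -/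
/-!
Since `g` sits in degree 0 with zero differential, the weak-morphism equation
`α ∘ d_tot = d_CE ∘ α` has only one family of possibly nonzero components: those landing
in `∧^{k+1} g^∨ ⊗ g`, where it reads `α_{k+1}(d v) + Σ_i (-1)^i α_k(x_i ▷ v) = d_CE(α_k v)`;
every other component lives in a zero space (`V` is non-negative, `Wg` is concentrated in
degree 0). Expanding `d_CE` and moving each bracket `[x_i, x_j]` to the front of the argument
list, a cyclic permutation of sign `(-1)^(j-1)`, turns this into the stated equation.
-/

open scoped BigOperators

section Prelude

variable (K g : Type) [Field K] [CharZero K] [LieRing g] [LieAlgebra K g]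

abbrev CEc (p : ℕ) (M : Type) [AddCommGroup M] [Module K M] : Type :=
  g [⋀^Fin p]→ₗ[K] M

/-- `D` is the Chevalley–Eilenberg differential with coefficients in `M`. -/
def IsCEDiff {M : Type} [AddCommGroup M] [Module K M] [LieRingModule g M]
    (D : ∀ p : ℕ, CEc K g p M →ₗ[K] CEc K g (p+1) M) : Prop :=
  ∀ (p : ℕ) (ω : CEc K g p M) (xs : Fin (p+1) → g),
    D p ω xs = ∑ i : Fin (p+1), ((-1 : ℤ)^(i : ℕ)) •
      (⁅xs i, ω (xs ∘ i.succAbove)⁆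
        - ∑ j : Fin p, if (i : ℕ) ≤ (j : ℕ) then
            ω (Function.update (xs ∘ i.succAbove) j ⁅xs i, xs (i.succAbove j)⁆)
          else 0)

variable {K g}
variable (V W : ℤ → Type)
  [∀ i, AddCommGroup (V i)] [∀ i, Module K (V i)]
  [∀ i, LieRingModule g (V i)] [∀ i, LieModule K g (V i)]
  [∀ i, AddCommGroup (W i)] [∀ i, Module K (W i)]
  [∀ i, LieRingModule g (W i)] [∀ i, LieModule K g (W i)]

/-- Componentwise description of a weak morphism of dg `g`-modules `V ⇝ W`,
i.e. of a degree-0 `Ω_g`-linear map `Ω_g(V) → Ω_g(W)` intertwining the total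
differentials. -/
def IsWeakMor
    (dV : ∀ i j : ℤ, j = i + 1 → (V i →ₗ[K] V j))
    (dW : ∀ i j : ℤ, j = i + 1 → (W i →ₗ[K] W j))
    (DW : ∀ (s : ℤ) (p : ℕ), CEc K g p (W s) →ₗ[K] CEc K g (p+1) (W s))
    (F : ∀ (l : ℕ) (s k : ℤ), s + l = k → (V k →ₗ[K] CEc K g l (W s))) : Prop :=
  (∀ (k k' : ℤ) (hk : k' = k + 1) (h1 : k' + ((0:ℕ):ℤ) = k') (h2 : k + ((0:ℕ):ℤ) = k)
      (v : V k),
    F 0 k' k' h1 (dV k k' hk v)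
      = (dW k k' hk).compAlternatingMap (F 0 k k h2 v)) ∧
  (∀ (m : ℕ) (s k k' : ℤ) (hk : k' = k + 1)
      (h1 : s + ((m+1 : ℕ):ℤ) = k') (h2 : s + ((m : ℕ):ℤ) = k)
      (h3 : (s-1) + ((m+1 : ℕ):ℤ) = k) (hs : s = (s-1) + 1)
      (v : V k) (xs : Fin (m+1) → g),
    F (m+1) s k' h1 (dV k k' hk v) xs
      + ∑ i : Fin (m+1), ((-1 : ℤ)^(i : ℕ)) •
          (F m s k h2 ⁅xs i, v⁆) (xs ∘ i.succAbove)
    = DW s m (F m s k h2 v) xs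
      + ((-1 : ℤ)^(m+1)) • dW (s-1) s hs ((F (m+1) (s-1) k h3 v) xs))

end Prelude

/-- For `i < j`, the tuple `(b, x₀, …, x̂ᵢ, …, x̂ⱼ, …, xₘ)`. -/
def consSkipTwo {g : Type} {m : ℕ} (xs : Fin (m + 1) → g) (i j : ℕ) (b : g) : Fin m → g :=
  fun t => if (t : ℕ) = 0 then b
    else xs ⟨if (t : ℕ) - 1 < i then (t : ℕ) - 1
        else if (t : ℕ) < j then (t : ℕ) else (t : ℕ) + 1,
      by have := t.isLt; split_ifs <;> omega⟩

theorem Fin.val_succAbove {n : ℕ} (p : Fin (n + 1)) (s : Fin n) :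
    (p.succAbove s : ℕ) = if (s : ℕ) < p then (s : ℕ) else (s : ℕ) + 1 := by
  unfold Fin.succAbove; split_ifs <;> simp_all [Fin.lt_def]

theorem update_comp_succAbove_eq_consSkipTwo_comp_cycleRange {g : Type} {m : ℕ}
    (xs : Fin (m + 1) → g) (i : Fin (m + 1)) (j : Fin m) (hij : (i : ℕ) ≤ j) (b : g) :
    Function.update (xs ∘ i.succAbove) j b = consSkipTwo xs i (j + 1) b ∘ j.cycleRange := by
  funext t
  rcases lt_trichotomy t j with h | rfl | h
  · simp only [Function.comp_apply, Function.update_of_ne h.ne, consSkipTwo,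
      Fin.coe_cycleRange_of_lt h, Nat.add_one_ne_zero, if_false]
    congr 1; ext; simp only [Fin.val_succAbove]; split_ifs <;> omega
  · have : NeZero m := ⟨by omega⟩
    simp [consSkipTwo]
  · have ht : (t : ℕ) ≠ 0 := by omega
    simp only [Function.comp_apply, Function.update_of_ne h.ne', Fin.cycleRange_of_gt h,
      consSkipTwo, ht, if_false]
    congr 1; ext; simp only [Fin.val_succAbove]; split_ifs <;> omega

section ChevalleyEilenberg

variable {K g : Type} [Field K] [LieRing g] [LieAlgebra K g]

theorem sum_pairs_consSkipTwo_eq_neg {M : Type} [AddCommGroup M] [Module K M] {m : ℕ}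
    (ω : CEc K g m M) (xs : Fin (m + 1) → g) :
    (∑ i : Fin (m + 1), ∑ j : Fin (m + 1), if (i : ℕ) < j then
        ((-1 : ℤ) ^ ((i : ℕ) + j)) • ω (consSkipTwo xs i j ⁅xs i, xs j⁆) else 0)
      = -∑ i : Fin (m + 1), ((-1 : ℤ) ^ (i : ℕ)) • ∑ j : Fin m, if (i : ℕ) ≤ j then
          ω (Function.update (xs ∘ i.succAbove) j ⁅xs i, xs (i.succAbove j)⁆) else 0 := by
  rw [← Finset.sum_neg_distrib]
  refine Finset.sum_congr rfl fun i _ => ?_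
  rw [Fin.sum_univ_succ, if_neg (by simp), zero_add, Finset.smul_sum, ← Finset.sum_neg_distrib]
  refine Finset.sum_congr rfl fun j _ => ?_
  by_cases hij : (i : ℕ) ≤ j
  · have hsucc : i.succAbove j = j.succ :=
      Fin.succAbove_of_le_castSucc _ _ (by rwa [Fin.le_def, Fin.val_castSucc])
    rw [if_pos (by simp only [Fin.val_succ]; omega), if_pos hij, hsucc, Fin.val_succ,
      update_comp_succAbove_eq_consSkipTwo_comp_cycleRange xs i j hij, AlternatingMap.map_perm,
      Fin.sign_cycleRange, Units.smul_def, smul_smul, ← neg_smul]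
    simp only [Units.val_pow_eq_pow_val, Units.val_neg, Units.val_one]
    congr 1
    ring
  · rw [if_neg (by simp only [Fin.val_succ]; omega), if_neg hij, smul_zero, neg_zero]

theorem IsCEDiff.apply_eq_sum_pairs {M : Type} [AddCommGroup M] [Module K M] [LieRingModule g M]
    {D : ∀ p : ℕ, CEc K g p M →ₗ[K] CEc K g (p + 1) M} (hD : IsCEDiff K g D) (p : ℕ)
    (ω : CEc K g p M) (xs : Fin (p + 1) → g) :
    D p ω xs
      = ∑ i : Fin (p + 1), ((-1 : ℤ) ^ (i : ℕ)) • ⁅xs i, ω (xs ∘ i.succAbove)⁆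
      + ∑ i : Fin (p + 1), ∑ j : Fin (p + 1), if (i : ℕ) < j then
          ((-1 : ℤ) ^ ((i : ℕ) + j)) • ω (consSkipTwo xs i j ⁅xs i, xs j⁆) else 0 := by
  rw [hD, sum_pairs_consSkipTwo_eq_neg, ← sub_eq_add_neg]
  simp only [smul_sub, Finset.sum_sub_distrib]

theorem IsCEDiff.add_sum_eq_apply_iff {N M : Type} [AddCommGroup N] [Module K N]
    [LieRingModule g N] [AddCommGroup M] [Module K M] [LieRingModule g M]
    {D : ∀ p : ℕ, CEc K g p N →ₗ[K] CEc K g (p + 1) N} (hD : IsCEDiff K g D)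
    (e : N →ₗ[K] M) (he : Function.Injective e)
    (he_lie : ∀ (x : g) (w : N), e ⁅x, w⁆ = ⁅x, e w⁆)
    {m : ℕ} (ω : CEc K g m N) (ω' : CEc K g (m + 1) N) (ωs : Fin (m + 1) → CEc K g m N)
    (xs : Fin (m + 1) → g) :
    ω' xs + ∑ i : Fin (m + 1), ((-1 : ℤ) ^ (i : ℕ)) • ωs i (xs ∘ i.succAbove)
        = D m ω xs ↔
      e (ω' xs) = ∑ i : Fin (m + 1), ((-1 : ℤ) ^ (i : ℕ)) •
          (⁅xs i, e (ω (xs ∘ i.succAbove))⁆ - e (ωs i (xs ∘ i.succAbove)))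
        + ∑ i : Fin (m + 1), ∑ j : Fin (m + 1), if (i : ℕ) < j then
            ((-1 : ℤ) ^ ((i : ℕ) + j)) • e (ω (consSkipTwo xs i j ⁅xs i, xs j⁆))
          else 0 := by
  rw [← he.eq_iff, hD.apply_eq_sum_pairs]
  simp only [map_add, map_sum, map_zsmul, he_lie, apply_ite e, map_zero, smul_sub,
    Finset.sum_sub_distrib]
  rw [sub_add_eq_add_sub, eq_sub_iff_add_eq]

end ChevalleyEilenberg

/-- Let `V` be a non-negative bounded dg `g`-module and
`A = {α_k : V^k → ∧^k g^∨ ⊗ g}` a family of linear maps.  The corresponding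
degree-0 `Ω_g`-linear map `α : Ω_g(V) → Ω_g(g)` (encoded by any weak-morphism
datum `F : V ⇝ Wg` compatible with `A`, where `Wg ≅ g` is concentrated in
degree 0 with the adjoint action) defines a dg Loday–Pirashvili module if and
only if the explicit equations (the paper's equation `(equation of f)`) hold:
for all `k`, `v ∈ V^k`, `x_0, …, x_k ∈ g`,

`α_{k+1}(d^V v | x_0,…,x_k) = Σ_i (-1)^i ([x_i, α_k(v|…x̂_i…)] - α_k(x_i ▷ v|…x̂_i…))
   + Σ_{i<j} (-1)^{i+j} α_k(v | [x_i,x_j], x_0,…,x̂_i,…,x̂_j,…,x_k)`. -/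
theorem statement3
    (K g : Type) [Field K] [LieRing g] [LieAlgebra K g]
    (V : ℤ → Type) [∀ i, AddCommGroup (V i)] [∀ i, Module K (V i)]
    [∀ i, LieRingModule g (V i)]
    (dV : ∀ i j : ℤ, j = i + 1 → (V i →ₗ[K] V j))
    (hVnn : ∀ i : ℤ, i < 0 → Subsingleton (V i))
    -- the target: a dg `g`-module `Wg` concentrated in degree 0, identified
    -- with the adjoint module `g`
    (Wg : ℤ → Type) [∀ i, AddCommGroup (Wg i)] [∀ i, Module K (Wg i)]
    [∀ i, LieRingModule g (Wg i)]
    (hWg0 : ∀ i : ℤ, i ≠ 0 → Subsingleton (Wg i))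
    (dWg : ∀ i j : ℤ, j = i + 1 → (Wg i →ₗ[K] Wg j))
    (hdWg : ∀ (i j : ℤ) (h : j = i + 1) (w : Wg i), dWg i j h w = 0)
    (e0 : Wg 0 ≃ₗ[K] g)
    (he0 : ∀ (x : g) (w : Wg 0), e0 ⁅x, w⁆ = ⁅x, e0 w⁆)
    (DWg : ∀ (s : ℤ) (p : ℕ), CEc K g p (Wg s) →ₗ[K] CEc K g (p+1) (Wg s))
    (hDWg : ∀ s : ℤ, IsCEDiff K g (DWg s))
    -- the family `α_k` and a componentwise representation `F` of the
    -- corresponding `Ω_g`-linear map `α : Ω_g(V) → Ω_g(g)`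
    (A : ∀ l : ℕ, V (l:ℤ) →ₗ[K] CEc K g l g)
    (F : ∀ (l : ℕ) (s k : ℤ), s + l = k → (V k →ₗ[K] CEc K g l (Wg s)))
    (hcompat : ∀ (l : ℕ) (h : (0:ℤ) + ((l:ℕ):ℤ) = (l:ℤ)) (v : V (l:ℤ))
      (xs : Fin l → g), e0 (F l 0 (l:ℤ) h v xs) = A l v xs) :
    -- `(V, α)` is a dg Loday–Pirashvili module
    IsWeakMor V Wg dV dWg DWg F
      ↔
    -- the explicit equations on the family `{α_k}`
    (∀ (k : ℕ) (hk : ((k+1 : ℕ):ℤ) = (k:ℕ) + 1) (v : V (k:ℤ))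
        (xs : Fin (k+1) → g),
      A (k+1) (dV (k:ℤ) ((k+1 : ℕ):ℤ) hk v) xs
        = (∑ i : Fin (k+1), ((-1 : ℤ)^(i : ℕ)) •
            (⁅xs i, A k v (xs ∘ i.succAbove)⁆
              - A k ⁅xs i, v⁆ (xs ∘ i.succAbove)))
          + ∑ i : Fin (k+1), ∑ j : Fin (k+1),
              if hij : (i : ℕ) < (j : ℕ) then
                ((-1 : ℤ)^((i:ℕ)+(j:ℕ))) • A k v (fun t : Fin k =>
                  if (t : ℕ) = 0 then ⁅xs i, xs j⁆
                  else xs ⟨if (t:ℕ) - 1 < (i:ℕ) then (t:ℕ) - 1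
                           else if (t:ℕ) < (j:ℕ) then (t:ℕ)
                           else (t:ℕ) + 1,
                           by have := t.isLt; split_ifs <;> omega⟩)
              else 0) := by
  constructor
  · intro hW k hk v xs
    have hk0 := hW.2 k 0 k (k + 1 : ℕ) hk (by omega) (by omega) (by omega) (by omega) v xs
    rw [hdWg, smul_zero, add_zero,
      (hDWg 0).add_sum_eq_apply_iff (e0 : Wg 0 →ₗ[K] g) e0.injective he0] at hk0
    simp only [LinearEquiv.coe_coe, hcompat] at hk0
    exact hk0
  · intro h
    refine ⟨fun k k' hk h1 h2 v => ?_, fun m s k k' hk h1 h2 h3 hs v xs => ?_⟩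
    · obtain rfl | hk' := eq_or_ne k' 0
      · obtain rfl : v = 0 := @Subsingleton.elim _ (hVnn k (by omega)) v 0
        simp only [map_zero, LinearMap.compAlternatingMap_zero]
      · ext; exact @Subsingleton.elim _ (hWg0 k' hk') _ _
    · obtain rfl | hs0 := eq_or_ne s 0
      · obtain rfl : k = m := by omega
        obtain rfl : k' = (m + 1 : ℕ) := by omega
        rw [hdWg, smul_zero, add_zero,
          (hDWg 0).add_sum_eq_apply_iff (e0 : Wg 0 →ₗ[K] g) e0.injective he0]
        simp only [LinearEquiv.coe_coe, hcompat]
        exact h m hk v xs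
      · exact @Subsingleton.elim _ (hWg0 s hs0) _ _
end

section
/- There is a one-to-one correspondence between dg Loday–Pirashvili modules (V, α) over g and degree-0 cocycles c(α) = c_0(α) + c_1(α) + ⋯ + c_u(α) of the total Chevalley–Eilenberg complex Ω_g(Hom(V, g)) of g with coefficients in the dg g-module Hom(V, g), where c_k(α) ∈ ∧^k g^∨ ⊗ Hom(V^k, g) is the element corresponding to α_k : V^k → ∧^k g^∨ ⊗ g. Moreover, there is a one-to-one correspondence between dg Loday–Pirashvili classes (V, [α]) over g and degree-0 cohomology classes of the total complex Ω_g(Hom(V, g)). -/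
/-!
STATEMENT 5.  A dg Loday–Pirashvili module structure `α = {α_k}` on `V` is the
same thing as a degree-0 cocycle `c(α) = Σ_k c_k(α)` of the total
Chevalley–Eilenberg complex `Ω_g(Hom(V, g))`, where
`c_k(α) ∈ ∧^k g^∨ ⊗ Hom(V^k, g)` repackages `α_k`; and dg Loday–Pirashvili
classes `(V, [α])` correspond to degree-0 cohomology classes of
`Ω_g(Hom(V, g))`.

Encoding: dg `g`-modules as ℤ-families; `CEc K g p M = ∧^p g^∨ ⊗ M`; the
`g`-module `Hom(V^k, g)` is `V k →ₗ[K] g` with Mathlib's Lie-module structure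
`⁅x, φ⁆ = ⁅x, φ(·)⁆ - φ(⁅x, ·⁆)`; `DHom` is its (uniquely characterised)
Chevalley–Eilenberg differential and `pck` the (uniquely characterised)
repackaging `(V^k →ₗ ∧^k g^∨ ⊗ g) → ∧^k g^∨ ⊗ Hom(V^k, g)`.  The two
correspondences are stated as equivalences: `IsLP α ↔ (c(α) is a 0-cocycle)`
and `α ∼ α' ↔ (c(α), c(α') are cohomologous)`.
-/

open scoped BigOperators

section Prelude

variable (K g : Type) [Field K] [CharZero K] [LieRing g] [LieAlgebra K g]

variable {K g}
variable (V : ℤ → Type)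
  [∀ i, AddCommGroup (V i)] [∀ i, Module K (V i)]
  [∀ i, LieRingModule g (V i)] [∀ i, LieModule K g (V i)]

/-- Componentwise dg Loday–Pirashvili structure `α : V ⇝ g`. -/
def IsLP
    (dV : ∀ i j : ℤ, j = i + 1 → (V i →ₗ[K] V j))
    (Dg : ∀ p : ℕ, CEc K g p g →ₗ[K] CEc K g (p+1) g)
    (A : ∀ l : ℕ, V (l:ℤ) →ₗ[K] CEc K g l g) : Prop :=
  ∀ (m : ℕ) (hk : ((m+1 : ℕ):ℤ) = (m : ℕ) + 1) (v : V (m:ℤ)) (xs : Fin (m+1) → g),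
    A (m+1) (dV (m:ℤ) ((m+1 : ℕ):ℤ) hk v) xs
      + ∑ i : Fin (m+1), ((-1 : ℤ)^(i : ℕ)) • A m ⁅xs i, v⁆ (xs ∘ i.succAbove)
    = Dg m (A m v) xs

/-- Componentwise homotopy between dg Loday–Pirashvili structures. -/
def IsLPHomotopy
    (dV : ∀ i j : ℤ, j = i + 1 → (V i →ₗ[K] V j))
    (Dg : ∀ p : ℕ, CEc K g p g →ₗ[K] CEc K g (p+1) g)
    (A A' : ∀ l : ℕ, V (l:ℤ) →ₗ[K] CEc K g l g)
    (Hh : ∀ l : ℕ, V ((l+1 : ℕ):ℤ) →ₗ[K] CEc K g l g) : Prop :=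
  (∀ (hk : ((1 : ℕ):ℤ) = ((0:ℕ):ℤ) + 1) (v : V ((0:ℕ):ℤ)),
    A' 0 v = A 0 v + Hh 0 (dV ((0:ℕ):ℤ) ((1:ℕ):ℤ) hk v)) ∧
  (∀ (m : ℕ) (hk : ((m+2 : ℕ):ℤ) = ((m+1 : ℕ):ℤ) + 1)
      (v : V ((m+1 : ℕ):ℤ)) (xs : Fin (m+1) → g),
    A' (m+1) v xs
      = A (m+1) v xs + Dg m (Hh m v) xs
        + Hh (m+1) (dV ((m+1:ℕ):ℤ) ((m+2:ℕ):ℤ) hk v) xs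
        - ∑ i : Fin (m+1), ((-1 : ℤ)^(i : ℕ)) • Hh m ⁅xs i, v⁆ (xs ∘ i.succAbove))

end Prelude

/-- Key computation: the CE differential on `Hom(V^q, g)`-valued forms,
applied to the repackaging of `Ak`, evaluated at `v`. -/
lemma DHom_pck
    {K g : Type} [Field K] [CharZero K] [LieRing g] [LieAlgebra K g]
    {V : ℤ → Type} [∀ i, AddCommGroup (V i)] [∀ i, Module K (V i)]
    [∀ i, LieRingModule g (V i)] [∀ i, LieModule K g (V i)]
    (Dg : ∀ p : ℕ, CEc K g p g →ₗ[K] CEc K g (p+1) g)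
    (hDg : IsCEDiff K g Dg)
    (DHom : ∀ (q : ℤ) (p : ℕ),
      CEc K g p (V q →ₗ[K] g) →ₗ[K] CEc K g (p+1) (V q →ₗ[K] g))
    (hDHom : ∀ q : ℤ, IsCEDiff K g (DHom q))
    (pck : ∀ (k : ℕ) (q : ℤ),
      (V q →ₗ[K] CEc K g k g) → CEc K g k (V q →ₗ[K] g))
    (hpck : ∀ (k : ℕ) (q : ℤ) (Ak : V q →ₗ[K] CEc K g k g)
      (xs : Fin k → g) (v : V q), pck k q Ak xs v = Ak v xs)
    (q : ℤ) (k : ℕ) (Ak : V q →ₗ[K] CEc K g k g) (xs : Fin (k+1) → g)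
    (v : V q) :
    DHom q k (pck k q Ak) xs v
      = Dg k (Ak v) xs
        - ∑ i : Fin (k+1), ((-1:ℤ)^(i:ℕ)) • Ak ⁅xs i, v⁆ (xs ∘ i.succAbove) := by
  rw [hDHom q k (pck k q Ak) xs, hDg k (Ak v) xs]
  rw [← Finset.sum_sub_distrib]
  rw [LinearMap.sum_apply]
  refine Finset.sum_congr rfl fun i _ => ?_
  simp only [LinearMap.smul_apply, LinearMap.sub_apply, LieHom.lie_apply,
    LinearMap.sum_apply, hpck, smul_sub]
  simp only [apply_ite (fun f : V q →ₗ[K] g => f v), hpck, LinearMap.zero_apply]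
  abel

/-- There is a one-to-one correspondence between dg
Loday–Pirashvili module structures `α = {α_k}` on `V` over `g` and degree-0
cocycles `c(α)` of the total Chevalley–Eilenberg complex `Ω_g(Hom(V, g))`,
and between dg Loday–Pirashvili classes `(V, [α])` and degree-0 cohomology
classes of `Ω_g(Hom(V, g))`.  (The repackaging `A ↦ c(A)` being the evident
bijection `pck` on components, the two correspondences are stated as:
`IsLP A ↔ c(A) is a 0-cocycle`, and `α ∼ α' ↔ c(α) − c(α')` is a coboundary.) -/
theorem statement5
    (K g : Type) [Field K] [CharZero K] [LieRing g] [LieAlgebra K g]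
    [Module.Finite K g]
    (V : ℤ → Type) [∀ i, AddCommGroup (V i)] [∀ i, Module K (V i)]
    [∀ i, LieRingModule g (V i)] [∀ i, LieModule K g (V i)]
    (dV : ∀ i j : ℤ, j = i + 1 → (V i →ₗ[K] V j))
    (hdVsq : ∀ (i j k : ℤ) (hij : j = i + 1) (hjk : k = j + 1) (v : V i),
      dV j k hjk (dV i j hij v) = 0)
    (hdVeq : ∀ (i j : ℤ) (h : j = i + 1) (x : g) (v : V i),
      dV i j h ⁅x, v⁆ = ⁅x, dV i j h v⁆)
    (hVnn : ∀ i : ℤ, i < 0 → Subsingleton (V i))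
    (hVbdd : ∃ N : ℤ, ∀ i : ℤ, N < i → Subsingleton (V i))
    -- Chevalley–Eilenberg differentials: on `g`-valued forms and on
    -- `Hom(V^q, g)`-valued forms
    (Dg : ∀ p : ℕ, CEc K g p g →ₗ[K] CEc K g (p+1) g)
    (hDg : IsCEDiff K g Dg)
    (DHom : ∀ (q : ℤ) (p : ℕ),
      CEc K g p (V q →ₗ[K] g) →ₗ[K] CEc K g (p+1) (V q →ₗ[K] g))
    (hDHom : ∀ q : ℤ, IsCEDiff K g (DHom q))
    -- the repackaging `∧^k g^∨ ⊗ Hom(V^k, g) ≅ Hom(V^k, ∧^k g^∨ ⊗ g)`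
    (pck : ∀ (k : ℕ) (q : ℤ),
      (V q →ₗ[K] CEc K g k g) → CEc K g k (V q →ₗ[K] g))
    (hpck : ∀ (k : ℕ) (q : ℤ) (Ak : V q →ₗ[K] CEc K g k g)
      (xs : Fin k → g) (v : V q), pck k q Ak xs v = Ak v xs) :
    -- (a) `α` is a dg Loday–Pirashvili structure iff `c(α)` is a 0-cocycle of
    -- the total complex `Ω_g(Hom(V, g))`
    (∀ A : ∀ l : ℕ, V (l:ℤ) →ₗ[K] CEc K g l g,
      IsLP V dV Dg A ↔
      (∀ (k : ℕ) (hk : ((k+1 : ℕ):ℤ) = (k:ℕ) + 1)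
          (xs : Fin (k+1) → g) (v : V (k:ℤ)),
        DHom (k:ℤ) k (pck k (k:ℤ) (A k)) xs v
          = pck (k+1) ((k+1:ℕ):ℤ) (A (k+1)) xs
              (dV (k:ℤ) ((k+1:ℕ):ℤ) hk v))) ∧
    -- (b) `α ∼ α'` (same dg Loday–Pirashvili class) iff `c(α)` and `c(α')`
    -- are cohomologous in `Ω_g(Hom(V, g))`
    (∀ A A' : ∀ l : ℕ, V (l:ℤ) →ₗ[K] CEc K g l g,
      (∃ Hh : ∀ l : ℕ, V ((l+1 : ℕ):ℤ) →ₗ[K] CEc K g l g,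
        IsLPHomotopy V dV Dg A A' Hh) ↔
      (∃ Hh : ∀ l : ℕ, V ((l+1 : ℕ):ℤ) →ₗ[K] CEc K g l g,
        -- `c(α') - c(α) = d_tot (c(h))`, componentwise:
        (∀ (hk : ((1 : ℕ):ℤ) = ((0:ℕ):ℤ) + 1) (xs : Fin 0 → g) (v : V ((0:ℕ):ℤ)),
          pck 0 ((0:ℕ):ℤ) (A' 0) xs v - pck 0 ((0:ℕ):ℤ) (A 0) xs v
            = pck 0 ((1:ℕ):ℤ) (Hh 0) xs (dV ((0:ℕ):ℤ) ((1:ℕ):ℤ) hk v)) ∧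
        (∀ (m : ℕ) (hk : ((m+2 : ℕ):ℤ) = ((m+1 : ℕ):ℤ) + 1)
            (xs : Fin (m+1) → g) (v : V ((m+1 : ℕ):ℤ)),
          pck (m+1) ((m+1:ℕ):ℤ) (A' (m+1)) xs v
              - pck (m+1) ((m+1:ℕ):ℤ) (A (m+1)) xs v
            = DHom ((m+1:ℕ):ℤ) m (pck m ((m+1:ℕ):ℤ) (Hh m)) xs v
              + pck (m+1) ((m+2:ℕ):ℤ) (Hh (m+1)) xs
                  (dV ((m+1:ℕ):ℤ) ((m+2:ℕ):ℤ) hk v)))) := by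
  constructor
  · intro A
    constructor
    · intro h k hk xs v
      rw [DHom_pck Dg hDg DHom hDHom pck hpck, hpck, ← h k hk v xs]
      abel
    · intro h m hk v xs
      have := h m hk xs v
      rw [DHom_pck Dg hDg DHom hDHom pck hpck, hpck] at this
      rw [← this]
      abel
  · intro A A'
    constructor
    · rintro ⟨Hh, h0, hs⟩
      refine ⟨Hh, fun hk xs v => ?_, fun m hk xs v => ?_⟩
      · rw [hpck, hpck, hpck, h0 hk v]
        simp
      · rw [hpck, hpck, hpck, DHom_pck Dg hDg DHom hDHom pck hpck,
          hs m hk v xs]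
        abel
    · rintro ⟨Hh, h0, hs⟩
      refine ⟨Hh, fun hk v => ?_, fun m hk v xs => ?_⟩
      · ext xs
        have := h0 hk xs v
        rw [hpck, hpck, hpck] at this
        simp only [AlternatingMap.add_apply]
        linear_combination (norm := abel) this
      · have := hs m hk xs v
        rw [hpck, hpck, hpck, DHom_pck Dg hDg DHom hDHom pck hpck] at this
        linear_combination (norm := abel) this
end

section
/- Let V = V^2 be a g-module concentrated in degree 2 (with zero differential). A linear map α_2 : V^2 → ∧^2 g^∨ ⊗ g defines a dg Loday–Pirashvili module α = {α_2} over g if and only if the corresponding map α_2 : ∧^2 g → Hom(V^2, g) is a 2-cocycle of g with coefficients in the g-module Hom(V^2, g), i.e., defines an abelian extension of g by Hom(V^2, g). -/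
/-!
Since `V` is trivial outside degree 2, a vector `v` of degree `m ≠ 2` is zero and the
differential `V² → V³` vanishes, so the only weak-morphism equation with content is the one
in degree 2, `∑ᵢ (-1)ⁱ α₂⁅xᵢ, v⁆ = d_CE(α₂ v)`. Evaluating `d_CE` at `(x, y, z)` and using
the antisymmetry of `α₂ v`, the difference of its two sides is the Chevalley–Eilenberg
coboundary of `α₂ : ∧² g → Hom(V², g)` at `(x, y, z)`.
-/

open scoped BigOperators

namespace Matrix

variable {α : Type*} (a b c : α)

theorem vecThree_comp_succAbove_zero : ![a, b, c] ∘ (0 : Fin 3).succAbove = ![b, c] := by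
  ext i; fin_cases i <;> rfl

theorem vecThree_comp_succAbove_one : ![a, b, c] ∘ (1 : Fin 3).succAbove = ![a, c] := by
  ext i; fin_cases i <;> rfl

theorem vecThree_comp_succAbove_two : ![a, b, c] ∘ (2 : Fin 3).succAbove = ![a, b] := by
  ext i; fin_cases i <;> rfl

theorem update_vecTwo_zero : Function.update ![a, b] 0 c = ![c, b] := by
  ext i; fin_cases i <;> rfl

theorem update_vecTwo_one : Function.update ![a, b] 1 c = ![a, c] := by
  ext i; fin_cases i <;> rfl

end Matrix

theorem AlternatingMap.map_vecTwo_swap {R M N : Type*} [CommSemiring R] [AddCommGroup M]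
    [Module R M] [AddCommGroup N] [Module R N] (f : M [⋀^Fin 2]→ₗ[R] N) (a b : M) :
    f ![b, a] = -f ![a, b] := by
  simpa using f.map_swap ![a, b] Fin.zero_ne_one

theorem Fin.sum_univ_three_neg_one_pow_smul {M : Type*} [AddCommGroup M] (f : Fin 3 → M) :
    ∑ i : Fin 3, ((-1 : ℤ) ^ (i : ℕ)) • f i = f 0 - f 1 + f 2 := by
  simp [Fin.sum_univ_three, sub_eq_add_neg]

theorem Fin.forall_fin_three_pi {α : Type*} {P : (Fin 3 → α) → Prop} :
    (∀ xs, P xs) ↔ ∀ x y z, P ![x, y, z] :=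
  (FinVec.forall_iff P).symm

section

variable {K g M : Type} [Field K] [LieRing g] [LieAlgebra K g] [AddCommGroup M] [Module K M]
  [LieRingModule g M]

theorem IsCEDiff.apply_vecThree {D : ∀ p : ℕ, CEc K g p M →ₗ[K] CEc K g (p+1) M}
    (hD : IsCEDiff K g D) (ω : CEc K g 2 M) (x y z : g) :
    D 2 ω ![x, y, z] = ⁅x, ω ![y, z]⁆ - ⁅y, ω ![x, z]⁆ + ⁅z, ω ![x, y]⁆
      - ω ![⁅x, y⁆, z] + ω ![⁅x, z⁆, y] - ω ![⁅y, z⁆, x] := by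
  rw [hD, Fin.sum_univ_three, Matrix.vecThree_comp_succAbove_zero,
    Matrix.vecThree_comp_succAbove_one, Matrix.vecThree_comp_succAbove_two]
  simp only [Fin.sum_univ_two, Fin.isValue, Fin.val_zero, Fin.val_one, Fin.val_two, le_refl,
    zero_le, Nat.le_zero, one_ne_zero, two_ne_zero, ite_true, ite_false, Fin.zero_succAbove,
    Fin.one_succAbove_one, Matrix.cons_val_zero, Matrix.cons_val_one, Matrix.cons_val_two,
    Matrix.head_cons, Matrix.tail_cons, Matrix.cons_val_succ, Matrix.update_vecTwo_zero,
    Matrix.update_vecTwo_one, ω.map_vecTwo_swap ⁅x, z⁆, ω.map_vecTwo_swap ⁅y, z⁆, pow_zero, pow_one,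
    neg_one_sq, one_smul, neg_one_smul, Nat.not_ofNat_le_one, zero_add, sub_zero]
  abel

end

section

variable {K g : Type} [Field K] [LieRing g] [LieAlgebra K g] {V : ℤ → Type}
  [∀ i, AddCommGroup (V i)] [∀ i, Module K (V i)] [∀ i, LieRingModule g (V i)]
  {dV : ∀ i j : ℤ, j = i + 1 → (V i →ₗ[K] V j)}
  {Dg : ∀ p : ℕ, CEc K g p g →ₗ[K] CEc K g (p+1) g} {A : ∀ l : ℕ, V (l:ℤ) →ₗ[K] CEc K g l g}

theorem isLP_iff_degree_two_of_subsingleton (hV : ∀ i : ℤ, i ≠ 2 → Subsingleton (V i)) :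
    IsLP V dV Dg A ↔ ∀ (v : V ((2:ℕ):ℤ)) (xs : Fin 3 → g),
      ∑ i : Fin 3, ((-1 : ℤ)^(i : ℕ)) • A 2 ⁅xs i, v⁆ (xs ∘ i.succAbove) = Dg 2 (A 2 v) xs := by
  have hdV : ∀ hk (v : V ((2:ℕ):ℤ)), dV _ ((2 + 1 : ℕ) : ℤ) hk v = 0 :=
    fun _ _ => @Subsingleton.elim _ (hV _ (by norm_num)) _ _
  refine ⟨fun h v xs => ?_, fun h m hk v xs => ?_⟩
  · simpa only [hdV, map_zero, AlternatingMap.zero_apply, zero_add] using h 2 rfl v xs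
  · obtain rfl | hm := eq_or_ne m 2
    · rw [hdV, map_zero, AlternatingMap.zero_apply, zero_add]
      exact h v xs
    · have : Subsingleton (V m) := hV m (by exact_mod_cast hm)
      simp [Subsingleton.elim v 0]

end

theorem statement7_general
    (K g : Type) [Field K] [LieRing g] [LieAlgebra K g]
    (V : ℤ → Type) [∀ i, AddCommGroup (V i)] [∀ i, Module K (V i)]
    [∀ i, LieRingModule g (V i)]
    -- `V` is concentrated in degree 2
    (hV2 : ∀ i : ℤ, i ≠ 2 → Subsingleton (V i))
    (dV : ∀ i j : ℤ, j = i + 1 → (V i →ₗ[K] V j))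
    (Dg : ∀ p : ℕ, CEc K g p g →ₗ[K] CEc K g (p+1) g)
    (hDg : IsCEDiff K g Dg)
    (A : ∀ l : ℕ, V (l:ℤ) →ₗ[K] CEc K g l g) :
    -- `α = {α₂}` is a dg Loday–Pirashvili module structure on `V` …
    IsLP V dV Dg A
      ↔
    -- … iff `α₂ : ∧² g → Hom(V², g)` is a 2-cocycle, i.e. defines an abelian
    -- extension of `g` by `Hom(V², g)`:
    (∀ (v : V ((2:ℕ):ℤ)) (x y z : g),
      (⁅x, A 2 v ![y, z]⁆ - A 2 ⁅x, v⁆ ![y, z])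
        - (⁅y, A 2 v ![x, z]⁆ - A 2 ⁅y, v⁆ ![x, z])
        + (⁅z, A 2 v ![x, y]⁆ - A 2 ⁅z, v⁆ ![x, y])
        - A 2 v ![⁅x, y⁆, z] + A 2 v ![⁅x, z⁆, y] - A 2 v ![⁅y, z⁆, x] = 0) := by
  rw [isLP_iff_degree_two_of_subsingleton hV2]
  refine forall_congr' fun v => Fin.forall_fin_three_pi.trans <| forall₃_congr fun x y z => ?_
  rw [Fin.sum_univ_three_neg_one_pow_smul, Matrix.vecThree_comp_succAbove_zero,
    Matrix.vecThree_comp_succAbove_one, Matrix.vecThree_comp_succAbove_two, hDg.apply_vecThree,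
    eq_comm, ← sub_eq_zero]
  simp only [Matrix.cons_val_zero, Matrix.cons_val_one, Matrix.cons_val_two, Matrix.tail_cons,
    Matrix.head_cons]
  abel_nf

/-- Let `V` be a `g`-module concentrated in degree 2 (all
other components trivial, hence zero differential).  A linear map
`α₂ = A 2 : V² → ∧² g^∨ ⊗ g` defines a dg Loday–Pirashvili module `α = {α₂}`
over `g` if and only if the corresponding `α₂ : ∧² g → Hom(V², g)` is a
Chevalley–Eilenberg 2-cocycle with coefficients in `Hom(V², g)` — equivalently,
defines an abelian extension of `g` by `Hom(V², g)`. -/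
theorem statement7
    (K g : Type) [Field K] [CharZero K] [LieRing g] [LieAlgebra K g]
    [Module.Finite K g]
    (V : ℤ → Type) [∀ i, AddCommGroup (V i)] [∀ i, Module K (V i)]
    [∀ i, LieRingModule g (V i)] [∀ i, LieModule K g (V i)]
    -- `V` is concentrated in degree 2
    (hV2 : ∀ i : ℤ, i ≠ 2 → Subsingleton (V i))
    (dV : ∀ i j : ℤ, j = i + 1 → (V i →ₗ[K] V j))
    (hdV : ∀ (i j : ℤ) (h : j = i + 1) (v : V i), dV i j h v = 0)
    (Dg : ∀ p : ℕ, CEc K g p g →ₗ[K] CEc K g (p+1) g)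
    (hDg : IsCEDiff K g Dg)
    (A : ∀ l : ℕ, V (l:ℤ) →ₗ[K] CEc K g l g) :
    -- `α = {α₂}` is a dg Loday–Pirashvili module structure on `V` …
    IsLP V dV Dg A
      ↔
    -- … iff `α₂ : ∧² g → Hom(V², g)` is a 2-cocycle, i.e. defines an abelian
    -- extension of `g` by `Hom(V², g)`:
    (∀ (v : V ((2:ℕ):ℤ)) (x y z : g),
      (⁅x, A 2 v ![y, z]⁆ - A 2 ⁅x, v⁆ ![y, z])
        - (⁅y, A 2 v ![x, z]⁆ - A 2 ⁅y, v⁆ ![x, z])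
        + (⁅z, A 2 v ![x, y]⁆ - A 2 ⁅z, v⁆ ![x, y])
        - A 2 v ![⁅x, y⁆, z] + A 2 v ![⁅x, z⁆, y] - A 2 v ![⁅y, z⁆, x] = 0) :=
  statement7_general K g V hV2 dV Dg hDg A
end

section
/- Two dg Loday–Pirashvili modules (V, α) and (V, α') over g are homotopic (as weak morphisms V ⇝ g of dg g-modules) if and only if the corresponding dg derivations δ_α and δ_{α'} of Ω_g valued in Ω_g(V^∨[−1]) are homotopic as dg derivations. -/
/-!
STATEMENT 8.  (Proposition `Prop:homotopy-homotopy`.)  Two dg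
Loday–Pirashvili modules `(V, α)` and `(V, α')` are homotopic (as weak
morphisms `V ⇝ g` of dg `g`-modules) if and only if the corresponding dg
derivations `δ_α, δ_{α'} : Ω_g → Ω_g(V^∨[-1])` are homotopic as dg
derivations.

Encoding: dg Loday–Pirashvili structures as component families `A, A'`
(`IsLP`), their homotopies as component families (`IsLPHomotopy`); dg
derivations by their generator components `Dl, Dl'` (`IsDgDer`), related to
`A, A'` by the pairing `Dl k ξ xs v = ξ (A k v xs)`; a homotopy of dg
derivations is a degree `(-1)` derivation `h : Ω_g → Ω_g(V^∨[-1])` with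
`δ' - δ = d_tot ∘ h + h ∘ d_CE`, encoded by its generator components `hD` and
the componentwise equations below.
-/

open scoped BigOperators

section Prelude

variable (K g : Type) [Field K] [CharZero K] [LieRing g] [LieAlgebra K g]

variable {K g}
variable (V : ℤ → Type)
  [∀ i, AddCommGroup (V i)] [∀ i, Module K (V i)]
  [∀ i, LieRingModule g (V i)] [∀ i, LieModule K g (V i)]

def IsDgDer
    (dV : ∀ i j : ℤ, j = i + 1 → (V i →ₗ[K] V j))
    (DDualV : ∀ (q : ℤ) (p : ℕ),
      CEc K g p (V q →ₗ[K] K) →ₗ[K] CEc K g (p+1) (V q →ₗ[K] K))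
    (Dl : ∀ k : ℕ, Module.Dual K g →ₗ[K] CEc K g k (V (k:ℤ) →ₗ[K] K)) : Prop :=
  ∀ (k : ℕ) (hk : ((k+1 : ℕ):ℤ) = (k:ℕ) + 1) (ξ : Module.Dual K g)
      (xs : Fin (k+1) → g) (v : V (k:ℤ)),
    (∑ j : Fin (k+1), ((-1 : ℤ)^(j : ℕ)) •
        Dl k (ξ ∘ₗ ((LieAlgebra.ad K g) (xs j) : g →ₗ[K] g)) (xs ∘ j.succAbove) v)
      = - DDualV (k:ℤ) k (Dl k ξ) xs v
        + Dl (k+1) ξ xs (dV (k:ℤ) ((k+1:ℕ):ℤ) hk v)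

end Prelude

set_option linter.unusedSectionVars false
set_option maxHeartbeats 1000000

section Aux
variable {K L W : Type} [Field K] [LieRing L] [LieAlgebra K L]
  [AddCommGroup W] [Module K W] [LieRingModule L W] [LieModule K L W]

def auxFlip {k : ℕ} (T : W →ₗ[K] (L [⋀^Fin k]→ₗ[K] L)) (ξ : Module.Dual K L) :
    L [⋀^Fin k]→ₗ[K] (W →ₗ[K] K) where
  toFun xs :=
    { toFun := fun v => ξ (T v xs)
      map_add' := fun a b => by simp
      map_smul' := fun c a => by simp }
  map_update_add' m i x y := by
    ext v; simp [MultilinearMap.map_update_add]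
  map_update_smul' m i c x := by
    ext v; simp [MultilinearMap.map_update_smul]
  map_eq_zero_of_eq' xs i j hij hne := by
    ext v; simp [(T v).map_eq_zero_of_eq xs hij hne]

@[simp] lemma auxFlip_apply {k : ℕ} (T : W →ₗ[K] (L [⋀^Fin k]→ₗ[K] L))
    (ξ : Module.Dual K L) (xs : Fin k → L) (v : W) :
    auxFlip T ξ xs v = ξ (T v xs) := rfl

def auxFlipL {k : ℕ} (T : W →ₗ[K] (L [⋀^Fin k]→ₗ[K] L)) :
    Module.Dual K L →ₗ[K] (L [⋀^Fin k]→ₗ[K] (W →ₗ[K] K)) where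
  toFun := auxFlip T
  map_add' ξ η := by ext xs v; simp
  map_smul' c ξ := by ext xs v; simp

@[simp] lemma auxFlipL_apply {k : ℕ} (T : W →ₗ[K] (L [⋀^Fin k]→ₗ[K] L))
    (ξ : Module.Dual K L) (xs : Fin k → L) (v : W) :
    auxFlipL T ξ xs v = ξ (T v xs) := rfl

variable [Module.Finite K L]

def auxUnflipE {k : ℕ}
    (D : Module.Dual K L →ₗ[K] (L [⋀^Fin k]→ₗ[K] (W →ₗ[K] K)))
    (xs : Fin k → L) (v : W) : Module.Dual K (Module.Dual K L) where
  toFun ξ := D ξ xs v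
  map_add' ξ η := by simp
  map_smul' c ξ := by simp

@[simp] lemma auxUnflipE_apply {k : ℕ}
    (D : Module.Dual K L →ₗ[K] (L [⋀^Fin k]→ₗ[K] (W →ₗ[K] K)))
    (xs : Fin k → L) (v : W) (ξ : Module.Dual K L) :
    auxUnflipE D xs v ξ = D ξ xs v := rfl

noncomputable def auxUnflip {k : ℕ}
    (D : Module.Dual K L →ₗ[K] (L [⋀^Fin k]→ₗ[K] (W →ₗ[K] K))) :
    W →ₗ[K] (L [⋀^Fin k]→ₗ[K] L) where
  toFun v :=
    { toFun := fun xs => (Module.evalEquiv K L).symm (auxUnflipE D xs v)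
      map_update_add' := fun m i x y => by
        have h : auxUnflipE D (Function.update m i (x + y)) v
            = auxUnflipE D (Function.update m i x) v
              + auxUnflipE D (Function.update m i y) v := by
          ext ξ; simp [MultilinearMap.map_update_add]
        simp only [h, map_add]
      map_update_smul' := fun m i c x => by
        have h : auxUnflipE D (Function.update m i (c • x)) v
            = c • auxUnflipE D (Function.update m i x) v := by
          ext ξ; simp [MultilinearMap.map_update_smul]
        simp only [h, map_smul]
      map_eq_zero_of_eq' := fun xs i j hij hne => by
        have h : auxUnflipE D xs v = 0 := by
          ext ξ; simp [(D ξ).map_eq_zero_of_eq xs hij hne]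
        simp only [h, map_zero] }
  map_add' a b := by
    ext xs
    have h : auxUnflipE D xs (a + b) = auxUnflipE D xs a + auxUnflipE D xs b := by
      ext ξ; simp
    show (Module.evalEquiv K L).symm _ = (Module.evalEquiv K L).symm _ + (Module.evalEquiv K L).symm _
    rw [h, map_add]
  map_smul' c a := by
    ext xs
    have h : auxUnflipE D xs (c • a) = c • auxUnflipE D xs a := by
      ext ξ; simp
    show (Module.evalEquiv K L).symm _ = c • (Module.evalEquiv K L).symm _
    rw [h, map_smul]

@[simp] lemma auxUnflip_pair {k : ℕ}
    (D : Module.Dual K L →ₗ[K] (L [⋀^Fin k]→ₗ[K] (W →ₗ[K] K)))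
    (ξ : Module.Dual K L) (xs : Fin k → L) (v : W) :
    ξ (auxUnflip D v xs) = D ξ xs v := by
  show ξ ((Module.evalEquiv K L).symm (auxUnflipE D xs v)) = _
  rw [Module.apply_evalEquiv_symm_apply]
  rfl

lemma ext_dual {x y : L} (h : ∀ ξ : Module.Dual K L, ξ x = ξ y) : x = y := by
  rw [← sub_eq_zero]
  exact (Module.forall_dual_apply_eq_zero_iff K _).mp fun φ => by
    rw [map_sub, h φ, sub_self]

end Aux

section Key
variable {K g : Type} [Field K] [LieRing g] [LieAlgebra K g]
variable {W : Type} [AddCommGroup W] [Module K W] [LieRingModule g W] [LieModule K g W]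

lemma keyCE {m : ℕ}
    (Dg : ∀ p : ℕ, CEc K g p g →ₗ[K] CEc K g (p+1) g) (hDg : IsCEDiff K g Dg)
    (DW : ∀ p : ℕ, CEc K g p (W →ₗ[K] K) →ₗ[K] CEc K g (p+1) (W →ₗ[K] K))
    (hDW : IsCEDiff K g DW)
    (ξ : Module.Dual K g) (B : W →ₗ[K] CEc K g m g) (C : CEc K g m (W →ₗ[K] K))
    (hBC : ∀ (xs : Fin m → g) (v : W), C xs v = ξ (B v xs))
    (xs : Fin (m+1) → g) (v : W) :
    ξ (Dg m (B v) xs)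
      = DW m C xs v
        + ∑ i : Fin (m+1), ((-1:ℤ)^(i:ℕ)) • ξ (B ⁅xs i, v⁆ (xs ∘ i.succAbove))
        + ∑ i : Fin (m+1), ((-1:ℤ)^(i:ℕ)) • ξ ⁅xs i, B v (xs ∘ i.succAbove)⁆ := by
  rw [hDg, hDW]
  simp only [map_sum, map_zsmul, map_sub, LinearMap.sum_apply, LinearMap.smul_apply,
    LinearMap.sub_apply, Module.Dual.lie_apply, apply_ite ξ, apply_ite (fun f : W →ₗ[K] K => f v),
    LinearMap.zero_apply, map_zero, hBC]
  rw [← Finset.sum_add_distrib, ← Finset.sum_add_distrib]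
  refine Finset.sum_congr rfl fun i _ => ?_
  rw [smul_sub, smul_sub, smul_neg]
  abel

end Key

/-- Let `(V, A)` and `(V, A')` be dg Loday–Pirashvili
modules over `g`, with corresponding dg derivations `Dl = δ_α`,
`Dl' = δ_{α'}` (pairing relation `Dl k ξ xs v = ξ (A k v xs)`).  Then `α` and
`α'` are homotopic as weak morphisms `V ⇝ g` if and only if `δ_α` and
`δ_{α'}` are homotopic as `Ω_g(V^∨[-1])`-valued dg derivations of `Ω_g`. -/
theorem statement8
    (K g : Type) [Field K] [CharZero K] [LieRing g] [LieAlgebra K g]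
    [Module.Finite K g]
    (V : ℤ → Type) [∀ i, AddCommGroup (V i)] [∀ i, Module K (V i)]
    [∀ i, LieRingModule g (V i)] [∀ i, LieModule K g (V i)]
    (dV : ∀ i j : ℤ, j = i + 1 → (V i →ₗ[K] V j))
    (hdVsq : ∀ (i j k : ℤ) (hij : j = i + 1) (hjk : k = j + 1) (v : V i),
      dV j k hjk (dV i j hij v) = 0)
    (hdVeq : ∀ (i j : ℤ) (h : j = i + 1) (x : g) (v : V i),
      dV i j h ⁅x, v⁆ = ⁅x, dV i j h v⁆)
    (hVnn : ∀ i : ℤ, i < 0 → Subsingleton (V i))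
    (hVbdd : ∃ N : ℤ, ∀ i : ℤ, N < i → Subsingleton (V i))
    (Dg : ∀ p : ℕ, CEc K g p g →ₗ[K] CEc K g (p+1) g) (hDg : IsCEDiff K g Dg)
    (DDualV : ∀ (q : ℤ) (p : ℕ),
      CEc K g p (V q →ₗ[K] K) →ₗ[K] CEc K g (p+1) (V q →ₗ[K] K))
    (hDDualV : ∀ q : ℤ, IsCEDiff K g (DDualV q))
    -- the two dg Loday–Pirashvili structures and their dg derivations
    (A A' : ∀ l : ℕ, V (l:ℤ) →ₗ[K] CEc K g l g)
    (hA : IsLP V dV Dg A) (hA' : IsLP V dV Dg A')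
    (Dl Dl' : ∀ k : ℕ, Module.Dual K g →ₗ[K] CEc K g k (V (k:ℤ) →ₗ[K] K))
    (hrel : ∀ (k : ℕ) (ξ : Module.Dual K g) (xs : Fin k → g) (v : V (k:ℤ)),
      Dl k ξ xs v = ξ (A k v xs))
    (hrel' : ∀ (k : ℕ) (ξ : Module.Dual K g) (xs : Fin k → g) (v : V (k:ℤ)),
      Dl' k ξ xs v = ξ (A' k v xs))
    (hDl : IsDgDer V dV DDualV Dl) (hDl' : IsDgDer V dV DDualV Dl') :
    -- `(V, α) ∼ (V, α')` as dg Loday–Pirashvili modules …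
    (∃ Hh : ∀ l : ℕ, V ((l+1 : ℕ):ℤ) →ₗ[K] CEc K g l g,
      IsLPHomotopy V dV Dg A A' Hh)
      ↔
    -- … iff `δ_α ∼ δ_{α'}` as dg derivations: there is a degree `(-1)`
    -- derivation `h : Ω_g → Ω_g(V^∨[-1])` (generator components `hD`) with
    -- `δ_{α'} - δ_α = d_tot ∘ h + h ∘ d_CE`:
    (∃ hD : ∀ k : ℕ, Module.Dual K g →ₗ[K] CEc K g k (V ((k+1 : ℕ):ℤ) →ₗ[K] K),
      (∀ (hk : ((1 : ℕ):ℤ) = ((0:ℕ):ℤ) + 1) (ξ : Module.Dual K g)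
          (xs : Fin 0 → g) (v : V ((0:ℕ):ℤ)),
        Dl' 0 ξ xs v - Dl 0 ξ xs v
          = hD 0 ξ xs (dV ((0:ℕ):ℤ) ((1:ℕ):ℤ) hk v)) ∧
      (∀ (m : ℕ) (hk : ((m+2 : ℕ):ℤ) = ((m+1 : ℕ):ℤ) + 1)
          (ξ : Module.Dual K g) (xs : Fin (m+1) → g) (v : V ((m+1 : ℕ):ℤ)),
        Dl' (m+1) ξ xs v - Dl (m+1) ξ xs v
          = DDualV ((m+1 : ℕ):ℤ) m (hD m ξ) xs v
            + hD (m+1) ξ xs (dV ((m+1:ℕ):ℤ) ((m+2:ℕ):ℤ) hk v)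
            + ∑ j : Fin (m+1), ((-1 : ℤ)^(j : ℕ)) •
                hD m (ξ ∘ₗ ((LieAlgebra.ad K g) (xs j) : g →ₗ[K] g))
                  (xs ∘ j.succAbove) v)) := by
  constructor
  · rintro ⟨Hh, h0, h1⟩
    refine ⟨fun k => auxFlipL (Hh k), ?_, ?_⟩
    · intro hk ξ xs v
      rw [hrel', hrel, h0 hk v]
      simp
    · intro m hk ξ xs v
      have key := keyCE Dg hDg (DDualV ((m+1 : ℕ):ℤ)) (hDDualV _) ξ (Hh m)
        (auxFlipL (Hh m) ξ) (fun xs v => rfl) xs v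
      rw [hrel', hrel, h1 m hk v xs]
      simp only [map_add, map_sub, map_sum, map_zsmul, auxFlipL_apply,
        LinearMap.coe_comp, Function.comp_apply, LieAlgebra.ad_apply]
      rw [key]
      abel
  · rintro ⟨hD, h0, h1⟩
    refine ⟨fun k => auxUnflip (hD k), ?_, ?_⟩
    · intro hk v
      ext xs
      refine ext_dual (K := K) fun ξ => ?_
      have h := h0 hk ξ xs v
      rw [hrel', hrel] at h
      simp only [AlternatingMap.add_apply, map_add, auxUnflip_pair]
      linear_combination h
    · intro m hk v xs
      refine ext_dual (K := K) fun ξ => ?_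
      have hh := h1 m hk ξ xs v
      rw [hrel', hrel] at hh
      have key := keyCE Dg hDg (DDualV ((m+1 : ℕ):ℤ)) (hDDualV _) ξ
        (auxUnflip (hD m)) (hD m ξ)
        (fun xs v => (auxUnflip_pair (hD m) ξ xs v).symm) xs v
      have hsum : ∀ j : Fin (m+1),
          hD m (ξ ∘ₗ ((LieAlgebra.ad K g) (xs j) : g →ₗ[K] g)) (xs ∘ j.succAbove) v
            = ξ ⁅xs j, auxUnflip (hD m) v (xs ∘ j.succAbove)⁆ := fun j => by
        exact (auxUnflip_pair (hD m)
          (ξ ∘ₗ ((LieAlgebra.ad K g) (xs j) : g →ₗ[K] g)) (xs ∘ j.succAbove) v).symm.trans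
          (by simp only [LinearMap.coe_comp, Function.comp_apply, LieAlgebra.ad_apply])
      simp only [hsum] at hh
      simp only [map_add, map_sub, map_sum, map_zsmul, auxUnflip_pair]
      simp only [auxUnflip_pair] at key
      simp only [zsmul_eq_mul, Int.cast_pow, Int.cast_neg, Int.cast_one] at hh key ⊢
      linear_combination hh - key
end

section
/- Let A → Ω be a dg derivation δ of a dg algebra A valued in a dg A-module Ω, and let (E, ∂_A) be a dg A-module. (1) For any δ-connection ∇ on E, the degree (+1) element At^∇_E := ∇ ∘ ∂_A − ∂_A ∘ ∇ ∈ Ω ⊗_A End_A(E) is a cocycle. (2) The cohomology class [At^∇_E] ∈ H^1(A, Ω ⊗_A End_A(E)) is independent of the choice of δ-connection ∇ on E. -/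
/-!
STATEMENT 9.  (Proposition-Definition `prop:Atiyah via connection`.)  For a dg
derivation `δ : A → Ω` of a (graded-commutative) dg algebra `A` and a dg
`A`-module `(E, ∂_A)`, the twisted Atiyah cocycle
`At^∇_E = ∇ ∘ ∂_A − ∂_A ∘ ∇` of any `δ`-connection `∇` on `E` is a cocycle,
and its cohomology class is independent of the choice of `∇`.

Encoding:
* `GradedDGAlgebra` is a ℤ-graded (internally graded, graded-commutative)
  dg algebra over `K`; `DGModuleOn` is a ℤ-graded dg module over it.
* The tensor product `Ω ⊗_A E` is represented by a dg module `T` together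
  with the (uniquely characterising) structure `TensorRep`: an `A`-balanced,
  grading- and differential-compatible pairing `tmul` whose image spans `T`.
* `At^∇_E` is regarded, as in the paper, as the degree `(+1)` map
  `E → Ω ⊗_A E`; "cocycle" and "cohomologous" are expressed in the hom
  complex: `D ∘ At + At ∘ D = 0`, resp. difference `= D ∘ h − h ∘ D` for a
  degree-0 `A`-linear `h`.
-/

/-- The sign `(-1)^n` for `n : ℤ`. -/
def sgn (n : ℤ) : ℤ := if Even n then 1 else -1

/-- A ℤ-graded, graded-commutative dg algebra over `K` (internally graded). -/
structure GradedDGAlgebra (K A : Type) [Field K] [Ring A] [Algebra K A] where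
  grading : ℤ → Submodule K A
  is_internal : DirectSum.IsInternal grading
  one_mem : (1 : A) ∈ grading 0
  mul_mem : ∀ {i j : ℤ} {a b : A}, a ∈ grading i → b ∈ grading j →
    a * b ∈ grading (i + j)
  mul_gcomm : ∀ {i j : ℤ} {a b : A}, a ∈ grading i → b ∈ grading j →
    a * b = sgn (i * j) • (b * a)
  d : A →ₗ[K] A
  d_mem : ∀ {i : ℤ} {a : A}, a ∈ grading i → d a ∈ grading (i + 1)
  d_sq : ∀ a : A, d (d a) = 0
  d_leibniz : ∀ {i : ℤ} {a : A} (b : A), a ∈ grading i →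
    d (a * b) = d a * b + sgn i • (a * d b)

/-- A ℤ-graded dg module over the graded dg algebra `𝒜`. -/
structure DGModuleOn (K A : Type) [Field K] [Ring A] [Algebra K A]
    (𝒜 : GradedDGAlgebra K A)
    (E : Type) [AddCommGroup E] [Module K E] [Module A E] [IsScalarTower K A E] where
  grading : ℤ → Submodule K E
  is_internal : DirectSum.IsInternal grading
  smul_mem : ∀ {i j : ℤ} {a : A} {e : E}, a ∈ 𝒜.grading i → e ∈ grading j →
    a • e ∈ grading (i + j)
  D : E →ₗ[K] E
  D_mem : ∀ {j : ℤ} {e : E}, e ∈ grading j → D e ∈ grading (j + 1)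
  D_sq : ∀ e : E, D (D e) = 0
  D_leibniz : ∀ {i : ℤ} {a : A} (e : E), a ∈ 𝒜.grading i →
    D (a • e) = 𝒜.d a • e + sgn i • (a • D e)

/-- A dg derivation of `A` valued in the dg `A`-module `(Ω, ∂_A)`: a degree-0
derivation `δ : A → Ω` commuting with the differentials. -/
structure DGDerivationOn (K A : Type) [Field K] [Ring A] [Algebra K A]
    (𝒜 : GradedDGAlgebra K A)
    (Ω : Type) [AddCommGroup Ω] [Module K Ω] [Module A Ω] [IsScalarTower K A Ω]
    (MΩ : DGModuleOn K A 𝒜 Ω) where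
  δ : A →ₗ[K] Ω
  δ_mem : ∀ {i : ℤ} {a : A}, a ∈ 𝒜.grading i → δ a ∈ MΩ.grading i
  δ_leibniz : ∀ {i j : ℤ} {a b : A}, a ∈ 𝒜.grading i → b ∈ 𝒜.grading j →
    δ (a * b) = sgn (i * j) • (b • δ a) + a • δ b
  δ_compat : ∀ a : A, δ (𝒜.d a) = MΩ.D (δ a)

/-- `T`, with the pairing `tmul`, represents the tensor product `Ω ⊗_A E` of
the dg `A`-modules `Ω` and `E`, together with its induced dg structure. -/
structure TensorRep (K A : Type) [Field K] [Ring A] [Algebra K A]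
    (𝒜 : GradedDGAlgebra K A)
    (Ω : Type) [AddCommGroup Ω] [Module K Ω] [Module A Ω] [IsScalarTower K A Ω]
    (MΩ : DGModuleOn K A 𝒜 Ω)
    (E : Type) [AddCommGroup E] [Module K E] [Module A E] [IsScalarTower K A E]
    (ME : DGModuleOn K A 𝒜 E)
    (T : Type) [AddCommGroup T] [Module K T] [Module A T] [IsScalarTower K A T]
    (MT : DGModuleOn K A 𝒜 T) where
  tmul : Ω →ₗ[K] E →ₗ[K] T
  tmul_mem : ∀ {i j : ℤ} {ω : Ω} {e : E}, ω ∈ MΩ.grading i → e ∈ ME.grading j →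
    tmul ω e ∈ MT.grading (i + j)
  tmul_smul_left : ∀ (a : A) (ω : Ω) (e : E), tmul (a • ω) e = a • tmul ω e
  tmul_smul_right : ∀ {i j : ℤ} {a : A} {ω : Ω} (e : E),
    a ∈ 𝒜.grading i → ω ∈ MΩ.grading j →
    tmul ω (a • e) = sgn (i * j) • (a • tmul ω e)
  tmul_span : ∀ t : T,
    t ∈ Submodule.span A (Set.range fun p : Ω × E => tmul p.1 p.2)
  D_tmul : ∀ {i : ℤ} {ω : Ω} (e : E), ω ∈ MΩ.grading i →
    MT.D (tmul ω e) = tmul (MΩ.D ω) e + sgn i • tmul ω (ME.D e)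

section Statement

variable (K A : Type) [Field K] [CharZero K] [Ring A] [Algebra K A]
  (𝒜 : GradedDGAlgebra K A)
  (Ω : Type) [AddCommGroup Ω] [Module K Ω] [Module A Ω] [IsScalarTower K A Ω]
  (MΩ : DGModuleOn K A 𝒜 Ω)
  (E : Type) [AddCommGroup E] [Module K E] [Module A E] [IsScalarTower K A E]
  (ME : DGModuleOn K A 𝒜 E)
  (T : Type) [AddCommGroup T] [Module K T] [Module A T] [IsScalarTower K A T]
  (MT : DGModuleOn K A 𝒜 T)

/-- A `δ`-connection on the `A`-module `E`: a degree-0 map `∇ : E → Ω ⊗_A E`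
with `∇(a e) = δ(a) ⊗ e + a ∇e`. -/
structure DeltaConnection (δ : DGDerivationOn K A 𝒜 Ω MΩ)
    (TR : TensorRep K A 𝒜 Ω MΩ E ME T MT) where
  conn : E →ₗ[K] T
  conn_mem : ∀ {j : ℤ} {e : E}, e ∈ ME.grading j → conn e ∈ MT.grading j
  conn_leibniz : ∀ (a : A) (e : E),
    conn (a • e) = TR.tmul (δ.δ a) e + a • conn e

end Statement

/-- Let `δ : A → Ω` be a dg derivation of the dg algebra `A`
and `(E, ∂_A)` a (projective) dg `A`-module.  (1) For any `δ`-connection `∇`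
on `E`, the degree `(+1)` element `At^∇_E = ∇ ∘ ∂_A − ∂_A ∘ ∇` of
`Ω ⊗_A End_A(E) ≅ Hom_A(E, Ω ⊗_A E)` is a cocycle.  (2) Its cohomology class
in `H¹(A, Ω ⊗_A End_A(E))` does not depend on the choice of `∇`: the Atiyah
cocycles of two `δ`-connections differ by the coboundary of a degree-0
`A`-linear map `h : E → Ω ⊗_A E`. -/
theorem statement9
    (K A : Type) [Field K] [CharZero K] [Ring A] [Algebra K A]
    (𝒜 : GradedDGAlgebra K A)
    (Ω : Type) [AddCommGroup Ω] [Module K Ω] [Module A Ω] [IsScalarTower K A Ω]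
    [Module.Projective A Ω]
    (MΩ : DGModuleOn K A 𝒜 Ω)
    (δ : DGDerivationOn K A 𝒜 Ω MΩ)
    (E : Type) [AddCommGroup E] [Module K E] [Module A E] [IsScalarTower K A E]
    [Module.Projective A E]
    (ME : DGModuleOn K A 𝒜 E)
    (T : Type) [AddCommGroup T] [Module K T] [Module A T] [IsScalarTower K A T]
    (MT : DGModuleOn K A 𝒜 T)
    (TR : TensorRep K A 𝒜 Ω MΩ E ME T MT)
    (Cn : DeltaConnection K A 𝒜 Ω MΩ E ME T MT δ TR) :
    -- (1) `At^∇_E = ∇ ∘ ∂_A − ∂_A ∘ ∇` is a cocycle: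
    (∀ e : E, MT.D (Cn.conn (ME.D e) - MT.D (Cn.conn e))
        + (Cn.conn (ME.D (ME.D e)) - MT.D (Cn.conn (ME.D e))) = 0) ∧
    -- (2) the class `[At^∇_E] ∈ H¹(A, Ω ⊗_A End_A E)` is independent of `∇`:
    (∀ Cn' : DeltaConnection K A 𝒜 Ω MΩ E ME T MT δ TR,
      ∃ h : E →ₗ[K] T,
        (∀ (a : A) (e : E), h (a • e) = a • h e) ∧
        (∀ {j : ℤ} {e : E}, e ∈ ME.grading j → h e ∈ MT.grading j) ∧
        (∀ e : E,
          (Cn'.conn (ME.D e) - MT.D (Cn'.conn e))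
            - (Cn.conn (ME.D e) - MT.D (Cn.conn e))
          = MT.D (h e) - h (ME.D e))) := by
  constructor
  · intro e
    rw [map_sub, MT.D_sq, ME.D_sq, map_zero]
    abel
  · intro Cn'
    refine ⟨Cn.conn - Cn'.conn, ?_, ?_, ?_⟩
    · intro a e
      simp [Cn.conn_leibniz, Cn'.conn_leibniz, smul_sub]
    · intro j e he
      exact Submodule.sub_mem _ (Cn.conn_mem he) (Cn'.conn_mem he)
    · intro e
      simp only [LinearMap.sub_apply, map_sub]
      abel
end

section
/- Let (L, g) be a Lie algebra pair, i.e., L a Lie algebra over K and g ⊂ L a Lie subalgebra, and let V be the 2-term dg g-module V^0 = L → V^1 = L/g with differential d^V = pr_{L/g}, where g acts on L by the adjoint action and on L/g by x ▷ pr_{L/g}(m) = pr_{L/g}([x, m]_L). Given any splitting (j : L/g → L, pr_g : L → g) of the short exact sequence 0 → g → L → L/g → 0, the maps α_0 = pr_g : V^0 → g and α_1 : V^1 ⊗ g → g, α_1(b | x) = pr_g([j(b), i(x)]_L), define a dg Loday–Pirashvili module (V, α = {α_0, α_1}) over g; different splittings yield homotopic α's, so that (L, g) determines a canonical dg Loday–Pirashvili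 class (V, [α]). Moreover, the functor H^0 sends this class to the Loday–Pirashvili module H^0(V) = ker(pr_{L/g}) = g with H^0(α) the identity map on g. -/
/-!
STATEMENT 19.  (Section 4 of the paper.)  A Lie algebra pair `(L, g)` gives a
canonical dg Loday–Pirashvili module on the two-term complex
`V = (L → L/g)`, well defined up to homotopy, whose image under `H⁰` is the
Loday–Pirashvili module `(g, id_g)`.

Encoding: `g` is a Lie subalgebra `gS` of `L`; the quotient `L/g` is an
abstract `g`-module `Q` with an equivariant surjection `prQ : L → Q` with
kernel `g`; the two-term dg `g`-module `V` is a family over `ℤ` concentrated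
in degrees 0, 1 with equivariant identifications `e0 : V 0 ≃ L`,
`e1 : V 1 ≃ Q` and differential `prQ`.  A dg Loday–Pirashvili structure is a
family `A l : V^l → ∧^l g^∨ ⊗ g` satisfying the componentwise weak-morphism
equations `IsLP`, and homotopies are as in `IsLPHomotopy`.
-/

open scoped BigOperators

section Aux19

variable {K L Q : Type} [Field K] [LieRing L] [LieAlgebra K L]
variable {gS : LieSubalgebra K L}

lemma auxBr (prg : L →ₗ[K] ↥gS) (hprgi : ∀ x : ↥gS, prg (x : L) = x)
    (z w : ↥gS) : prg ⁅(z:L), (w:L)⁆ = ⁅z, w⁆ := by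
  rw [← LieSubalgebra.coe_bracket, hprgi]

/-- degree-0 LP equation -/
lemma aux0 (prg : L →ₗ[K] ↥gS) (hprgi : ∀ x : ↥gS, prg (x : L) = x)
    (n : L) (x : ↥gS) :
    prg ⁅n - ((prg n : L)), (x:L)⁆ + prg ⁅(x:L), n⁆ = ⁅x, prg n⁆ := by
  rw [sub_lie, map_sub, auxBr prg hprgi]
  have h : prg ⁅(x:L), n⁆ = - prg ⁅n, (x:L)⁆ := by rw [← lie_skew, map_neg]
  rw [h, ← lie_skew (prg n) x]
  abel

/-- degree-1 LP equation -/
lemma aux1 (prg : L →ₗ[K] ↥gS) (hprgi : ∀ x : ↥gS, prg (x : L) = x)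
    (m0 : L) (x y : ↥gS) :
    prg ⁅⁅(x:L), m0⁆ - ((prg ⁅(x:L), m0⁆ : L)), (y:L)⁆
      - prg ⁅⁅(y:L), m0⁆ - ((prg ⁅(y:L), m0⁆ : L)), (x:L)⁆
    = ⁅x, prg ⁅m0, (y:L)⁆⁆ - prg ⁅m0, ((⁅x,y⁆ : ↥gS) : L)⁆ - ⁅y, prg ⁅m0, (x:L)⁆⁆ := by
  have hs : ∀ a : L, ∀ z : ↥gS, prg ⁅a, (z:L)⁆ = - prg ⁅(z:L), a⁆ := by
    intro a z; rw [← lie_skew, map_neg]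
  rw [sub_lie, sub_lie, map_sub, map_sub, auxBr prg hprgi, auxBr prg hprgi,
    hs m0 y, hs m0 ⁅x,y⁆, hs m0 x]
  have hjac : ⁅⁅(x:L), m0⁆, (y:L)⁆ - ⁅⁅(y:L), m0⁆, (x:L)⁆ = ⁅((⁅x,y⁆ : ↥gS):L), m0⁆ := by
    rw [LieSubalgebra.coe_bracket, ← lie_skew (⁅(x:L), m0⁆) (y:L),
      ← lie_skew (⁅(y:L), m0⁆) (x:L), lie_lie (x:L) (y:L) m0]
    abel
  have h2 := congrArg prg hjac
  rw [map_sub] at h2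
  simp only [lie_neg]
  rw [← lie_skew (prg ⁅(x:L), m0⁆) y, ← lie_skew (prg ⁅(y:L), m0⁆) x]
  rw [show prg ⁅⁅(x:L), m0⁆, (y:L)⁆
      = prg ⁅((⁅x,y⁆ : ↥gS):L), m0⁆ + prg ⁅⁅(y:L), m0⁆, (x:L)⁆ from by
    rw [← h2]; abel]
  abel

variable [AddCommGroup Q] [Module K Q] [LieRingModule (↥gS) Q]

/-- the `j`-image of the Bott action in terms of the splitting -/
lemma auxJB (prQ : L →ₗ[K] Q)
    (hprQBott : ∀ (x : ↥gS) (m : L), prQ ⁅(x : L), m⁆ = ⁅x, prQ m⁆)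
    (j : Q →ₗ[K] L) (prg : L →ₗ[K] ↥gS)
    (hjsec : ∀ q : Q, prQ (j q) = q)
    (hsum : ∀ m : L, ((prg m : L) + j (prQ m)) = m)
    (b : Q) (x : ↥gS) :
    j ⁅x, b⁆ = ⁅(x:L), j b⁆ - ((prg ⁅(x:L), j b⁆ : L)) := by
  have h1 : prQ ⁅(x:L), j b⁆ = ⁅x, b⁆ := by rw [hprQBott, hjsec]
  have h2 := eq_sub_of_add_eq' (hsum ⁅(x:L), j b⁆)
  rw [h1] at h2
  exact h2

/-- coercion of `prg ⁅m0, x⁆` in terms of the splitting -/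
lemma auxPC (prQ : L →ₗ[K] Q)
    (hprQBott : ∀ (x : ↥gS) (m : L), prQ ⁅(x : L), m⁆ = ⁅x, prQ m⁆)
    (j : Q →ₗ[K] L) (prg : L →ₗ[K] ↥gS)
    (hsum : ∀ m : L, ((prg m : L) + j (prQ m)) = m)
    (m0 : L) (x : ↥gS) :
    ((prg ⁅m0, (x:L)⁆ : L)) = ⁅m0, (x:L)⁆ + j ⁅x, prQ m0⁆ := by
  have h := eq_sub_of_add_eq (hsum ⁅m0, (x:L)⁆)
  have h3 : prQ ⁅m0, (x:L)⁆ = - ⁅x, prQ m0⁆ := by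
    rw [← lie_skew, map_neg, hprQBott]
  rw [h, h3, map_neg, sub_neg_eq_add]

end Aux19



/-- Let `(L, gS)` be a Lie algebra pair and `V` the two-term
dg `gS`-module `L → L/gS` (with the adjoint action on `L` and the Bott action
on `Q = L/gS`).  For any splitting `(j, prg)` of `0 → gS → L → Q → 0`, the maps
`α₀ = prg` and `α₁(b | x) = prg ⁅j b, x⁆` define a dg Loday–Pirashvili module
structure on `V`; two splittings give homotopic structures (hence a canonical
dg Loday–Pirashvili class); and `H⁰` sends this class to the Loday–Pirashvili
module `(H⁰(V), H⁰(α)) = (gS, id)`. -/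
theorem statement19
    (K L : Type) [Field K] [CharZero K] [LieRing L] [LieAlgebra K L]
    [Module.Finite K L]
    (gS : LieSubalgebra K L)
    -- the quotient `Q = L/gS` as a `gS`-module, with the Bott action
    (Q : Type) [AddCommGroup Q] [Module K Q]
    [LieRingModule (↥gS) Q] [LieModule K (↥gS) Q]
    (prQ : L →ₗ[K] Q) (hprQsurj : Function.Surjective prQ)
    (hprQker : LinearMap.ker prQ = gS.toSubmodule)
    (hprQBott : ∀ (x : ↥gS) (m : L), prQ ⁅(x : L), m⁆ = ⁅x, prQ m⁆)
    -- the two-term dg `gS`-module `V : V⁰ = L → V¹ = Q`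
    (V : ℤ → Type) [∀ i, AddCommGroup (V i)] [∀ i, Module K (V i)]
    [∀ i, LieRingModule (↥gS) (V i)] [∀ i, LieModule K (↥gS) (V i)]
    (hVconc : ∀ i : ℤ, i ≠ 0 → i ≠ 1 → Subsingleton (V i))
    (e0 : V 0 ≃ₗ[K] L)
    (he0 : ∀ (x : ↥gS) (v : V 0), e0 ⁅x, v⁆ = ⁅(x : L), e0 v⁆)
    (e1 : V 1 ≃ₗ[K] Q)
    (he1 : ∀ (x : ↥gS) (v : V 1), e1 ⁅x, v⁆ = ⁅x, e1 v⁆)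
    (dV : ∀ i j : ℤ, j = i + 1 → (V i →ₗ[K] V j))
    (hdV01 : ∀ (h : (1:ℤ) = 0 + 1) (v : V 0), e1 (dV 0 1 h v) = prQ (e0 v))
    -- the Chevalley–Eilenberg differential with coefficients in the adjoint module
    (Dg : ∀ p : ℕ, CEc K (↥gS) p (↥gS) →ₗ[K] CEc K (↥gS) (p+1) (↥gS))
    (hDg : IsCEDiff K (↥gS) Dg) :
    -- (1) each splitting `(j, prg)` yields a dg Loday–Pirashvili structure
    (∀ (j : Q →ₗ[K] L) (prg : L →ₗ[K] ↥gS),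
      (∀ x : ↥gS, prg (x : L) = x) →
      (∀ q : Q, prQ (j q) = q) →
      (∀ m : L, ((prg m : L) + j (prQ m)) = m) →
      ∀ A : ∀ l : ℕ, V (l:ℤ) →ₗ[K] CEc K (↥gS) l (↥gS),
        (∀ v : V ((0:ℕ):ℤ), A 0 v (fun i => i.elim0) = prg (e0 v)) →
        (∀ (v : V ((1:ℕ):ℤ)) (xs : Fin 1 → ↥gS),
          A 1 v xs = prg ⁅j (e1 v), (xs 0 : L)⁆) →
        IsLP V dV Dg A) ∧
    -- (2) two splittings yield homotopic structures: a canonical dg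
    -- Loday–Pirashvili class
    (∀ (j j' : Q →ₗ[K] L) (prg prg' : L →ₗ[K] ↥gS),
      (∀ x : ↥gS, prg (x : L) = x) → (∀ q : Q, prQ (j q) = q) →
      (∀ m : L, ((prg m : L) + j (prQ m)) = m) →
      (∀ x : ↥gS, prg' (x : L) = x) → (∀ q : Q, prQ (j' q) = q) →
      (∀ m : L, ((prg' m : L) + j' (prQ m)) = m) →
      ∀ A A' : ∀ l : ℕ, V (l:ℤ) →ₗ[K] CEc K (↥gS) l (↥gS),
        (∀ v : V ((0:ℕ):ℤ), A 0 v (fun i => i.elim0) = prg (e0 v)) →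
        (∀ (v : V ((1:ℕ):ℤ)) (xs : Fin 1 → ↥gS),
          A 1 v xs = prg ⁅j (e1 v), (xs 0 : L)⁆) →
        (∀ v : V ((0:ℕ):ℤ), A' 0 v (fun i => i.elim0) = prg' (e0 v)) →
        (∀ (v : V ((1:ℕ):ℤ)) (xs : Fin 1 → ↥gS),
          A' 1 v xs = prg' ⁅j' (e1 v), (xs 0 : L)⁆) →
        ∃ Hh : ∀ l : ℕ, V ((l+1 : ℕ):ℤ) →ₗ[K] CEc K (↥gS) l (↥gS),
          IsLPHomotopy V dV Dg A A' Hh) ∧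
    -- (3) `H⁰(V) = ker(d⁰_V) = gS` and `H⁰(α)` is the identity of `gS`
    ((∀ (h : (1:ℤ) = 0 + 1) (v : V 0), dV 0 1 h v = 0 ↔ e0 v ∈ gS) ∧
     (∀ (j : Q →ₗ[K] L) (prg : L →ₗ[K] ↥gS),
      (∀ x : ↥gS, prg (x : L) = x) →
      (∀ q : Q, prQ (j q) = q) →
      (∀ m : L, ((prg m : L) + j (prQ m)) = m) →
      ∀ A : ∀ l : ℕ, V (l:ℤ) →ₗ[K] CEc K (↥gS) l (↥gS),
        (∀ v : V ((0:ℕ):ℤ), A 0 v (fun i => i.elim0) = prg (e0 v)) →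
        ∀ v : V ((0:ℕ):ℤ), e0 v ∈ gS →
          ((A 0 v (fun i => i.elim0) : ↥gS) : L) = e0 v)) := by
  classical
  have hfe0 : ∀ f : Fin 0 → (↥gS), f = (fun i => i.elim0) :=
    fun f => funext fun i => i.elim0
  refine ⟨?_, ?_, ?_, ?_⟩
  · -- Part (1)
    intro j prg hprgi hjsec hsum A hA0 hA1
    intro m hk v xs
    match m, hk, v, xs with
    | 0, hk, v, xs =>
      rw [hDg 0 (A 0 v) xs, Fin.sum_univ_one, Fin.sum_univ_one,
        hA1 _ xs, hfe0 (xs ∘ Fin.succAbove 0), hA0 ⁅xs 0, v⁆, hA0 v, he0,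
        show e1 ((dV ((0:ℕ):ℤ) ((0+1:ℕ):ℤ) hk) v) = prQ (e0 v) from hdV01 hk v]
      simp only [Fin.val_zero, pow_zero, one_smul, Finset.univ_eq_empty,
        Finset.sum_empty, sub_zero]
      rw [eq_sub_of_add_eq' (hsum (e0 v))]
      exact aux0 prg hprgi (e0 v) (xs 0)
    | 1, hk, v, xs =>
      haveI : Subsingleton (V ((1+1:ℕ):ℤ)) := hVconc _ (by omega) (by omega)
      rw [Subsingleton.elim (dV ((1:ℕ):ℤ) ((1+1:ℕ):ℤ) hk v) 0, map_zero]
      rw [hDg 1 (A 1 v) xs, Fin.sum_univ_two, Fin.sum_univ_two,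
        Fin.sum_univ_one, Fin.sum_univ_one]
      simp only [AlternatingMap.zero_apply, zero_add, Fin.val_zero, Fin.val_one,
        pow_zero, pow_one, one_smul, neg_smul, le_refl, if_true,
        Function.comp_apply, hA1, he1, Function.update_self]
      norm_num
      rw [auxJB prQ hprQBott j prg hjsec hsum (e1 v) (xs 0),
        auxJB prQ hprQBott j prg hjsec hsum (e1 v) (xs 1),
        ← LieSubalgebra.coe_bracket,
        ← lie_skew (prg ⁅j (e1 v), ((xs 0 : ↥gS) : L)⁆) (xs 1),
        ← sub_eq_add_neg, ← sub_eq_add_neg]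
      exact aux1 prg hprgi (j (e1 v)) (xs 0) (xs 1)
    | (m+2), hk, v, xs =>
      haveI : Subsingleton (V ((m+2:ℕ):ℤ)) := hVconc _ (by omega) (by omega)
      rw [Subsingleton.elim v 0]
      simp
  · -- Part (2)
    intro j j' prg prg' hprgi hjsec hsum hprgi' hjsec' hsum' A A' hA0 hA1 hA0' hA1'
    have hmem : ∀ q : Q, j q - j' q ∈ gS := by
      intro q
      have h : j q - j' q ∈ LinearMap.ker prQ := by
        rw [LinearMap.mem_ker, map_sub, hjsec, hjsec', sub_self]
      rw [hprQker] at h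
      exact h
    let hm : Q →ₗ[K] ↥gS :=
      { toFun := fun q => ⟨j q - j' q, hmem q⟩
        map_add' := fun a b => Subtype.ext (by simp [map_add]; abel)
        map_smul' := fun c a => Subtype.ext (by simp only [RingHom.id_apply, map_smul]; exact (smul_sub c (j a) (j' a)).symm) }
    let H0 : V ((0+1:ℕ):ℤ) →ₗ[K] CEc K (↥gS) 0 (↥gS) :=
      { toFun := fun v => AlternatingMap.constOfIsEmpty K (↥gS) (Fin 0) (hm (e1 v))
        map_add' := fun a b => by ext xs; simp
        map_smul' := fun c a => by ext xs; simp }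
    refine ⟨fun l => Nat.casesOn l H0 (fun _ => 0), ?_, ?_⟩
    · intro hk v
      ext xs
      rw [hfe0 xs, AlternatingMap.add_apply, hA0', hA0]
      show ((prg' (e0 v) : L))
          = (((prg (e0 v) + hm (e1 ((dV ((0:ℕ):ℤ) ((1:ℕ):ℤ) hk) v)) : ↥gS)) : L)
      rw [show ∀ a b : ↥gS, (((a + b : ↥gS)) : L) = (a : L) + (b : L) from fun _ _ => rfl]
      rw [show ((hm (e1 ((dV ((0:ℕ):ℤ) ((1:ℕ):ℤ) hk) v)) : L))
          = j (e1 ((dV ((0:ℕ):ℤ) ((1:ℕ):ℤ) hk) v)) - j' (e1 ((dV ((0:ℕ):ℤ) ((1:ℕ):ℤ) hk) v)) from rfl]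
      rw [show e1 ((dV ((0:ℕ):ℤ) ((1:ℕ):ℤ) hk) v) = prQ (e0 v) from hdV01 hk v]
      rw [eq_sub_of_add_eq' (hsum (e0 v)), eq_sub_of_add_eq' (hsum' (e0 v))]
      abel
    · intro m hk v xs
      match m, hk, v, xs with
      | 0, hk, v, xs =>
        show A' 1 v xs
            = A 1 v xs + Dg 0 (H0 v) xs
              + ((0 : V ((1+1:ℕ):ℤ) →ₗ[K] CEc K (↥gS) 1 (↥gS))
                  ((dV ((0+1:ℕ):ℤ) ((0+2:ℕ):ℤ) hk) v)) xs
            - ∑ i : Fin 1, ((-1 : ℤ))^(i:ℕ) • (H0 ⁅xs i, v⁆) (xs ∘ i.succAbove)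
        rw [hA1' _ xs, hA1 _ xs, hDg 0 (H0 v) xs, Fin.sum_univ_one, Fin.sum_univ_one]
        simp only [LinearMap.zero_apply, AlternatingMap.zero_apply, Fin.val_zero,
          pow_zero, one_smul, Finset.univ_eq_empty, Finset.sum_empty, sub_zero, add_zero]
        rw [show (H0 v) (xs ∘ Fin.succAbove 0) = hm (e1 v) from rfl,
          show (H0 ⁅xs 0, v⁆) (xs ∘ Fin.succAbove 0) = hm (e1 ⁅xs 0, v⁆) from rfl,
          he1]
        apply Subtype.ext
        rw [show ∀ a b : ↥gS, (((a - b : ↥gS)) : L) = (a : L) - (b : L) from fun _ _ => rfl]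
        rw [show ∀ a b : ↥gS, (((a + b : ↥gS)) : L) = (a : L) + (b : L) from fun _ _ => rfl]
        rw [LieSubalgebra.coe_bracket]
        rw [show ((hm (e1 v) : L)) = j (e1 v) - j' (e1 v) from rfl]
        rw [show ((hm ⁅xs 0, e1 v⁆ : L)) = j ⁅xs 0, e1 v⁆ - j' ⁅xs 0, e1 v⁆ from rfl]
        rw [auxPC prQ hprQBott j' prg' hsum' (j' (e1 v)) (xs 0),
          auxPC prQ hprQBott j prg hsum (j (e1 v)) (xs 0),
          hjsec, hjsec']
        rw [lie_sub, ← lie_skew ((xs 0 : ↥gS) : L) (j (e1 v)),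
          ← lie_skew ((xs 0 : ↥gS) : L) (j' (e1 v))]
        abel
      | (m+1), hk, v, xs =>
        haveI : Subsingleton (V ((m+2:ℕ):ℤ)) := hVconc _ (by omega) (by omega)
        rw [Subsingleton.elim v 0]
        simp
  · -- Part (3a)
    intro h v
    constructor
    · intro hz
      have : prQ (e0 v) = 0 := by rw [← hdV01 h v, hz, map_zero]
      have := LinearMap.mem_ker.mpr this
      rw [hprQker] at this
      exact this
    · intro hmem
      have h1 : prQ (e0 v) = 0 := by
        have : e0 v ∈ LinearMap.ker prQ := by
          rw [hprQker]; exact hmem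
        exact this
      have h2 : e1 (dV 0 1 h v) = 0 := by rw [hdV01 h v, h1]
      exact (LinearEquiv.map_eq_zero_iff e1).mp h2
  · -- Part (3b)
    intro j prg hprgi hjsec hsum A hA0 v hv
    rw [hA0 v]
    have := hprgi ⟨e0 v, hv⟩
    rw [show ((⟨e0 v, hv⟩ : ↥gS) : L) = e0 v from rfl] at this
    rw [this]
end
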